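/- arXiv:1006.1959 — 2 statements merged into one kernel-verified Lean document; each statement's English description precedes it below -/
import Mathlib

section
/- For all integers n ≥ 1 and j with 0 ≤ j ≤ n, the binomial identity Σ_{k ≥ 0} N(n,k)·C(k+1,j) = (1/(n−j+1))·C(n,j)·C(2n−j, n) holds, where N(n,k) = (1/n)·C(n,k)·C(n,k+1) is the Narayana number and C denotes the binomial coefficient. -/
/-!
Absorbing `C(k+1, j)` gives `C(n, k+1) C(k+1, j) = C(n, j) C(n-j, n-1-k)`, so the sum is
`C(n, j) / n` times the Vandermonde convolution `∑ₖ C(n, k) C(n-j, n-1-k) = C(2n-j, n-1)`.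
The ratio `C(2n-j, n) / C(2n-j, n-1) = (n-j+1) / n` then turns this into the right-hand side.
-/

open Finset

namespace Nat

theorem sum_range_choose_mul_choose_sub (a b m : ℕ) :
    ∑ k ∈ range (m + 1), a.choose k * b.choose (m - k) = (a + b).choose m := by
  rw [add_choose_eq, Finset.Nat.sum_antidiagonal_eq_sum_range_succ_mk]

theorem choose_mul_choose_eq_choose_mul_choose_sub {n m : ℕ} (j : ℕ) (hm : m ≤ n) :
    n.choose m * m.choose j = n.choose j * (n - j).choose (n - m) := by
  rcases le_or_gt j m with hjm | hmj
  · rw [choose_mul hjm, ← choose_symm (by omega : m - j ≤ n - j)]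
    congr 2
    omega
  · rw [choose_eq_zero_of_lt hmj, mul_zero]
    rcases le_or_gt j n with hjn | hnj
    · rw [choose_eq_zero_of_lt (by omega : n - j < n - m), mul_zero]
    · rw [choose_eq_zero_of_lt hnj, zero_mul]

theorem sum_range_choose_mul_choose_succ_mul_choose {n : ℕ} (j : ℕ) (hn : 1 ≤ n) :
    ∑ k ∈ range n, n.choose k * n.choose (k + 1) * (k + 1).choose j =
      n.choose j * (n + (n - j)).choose (n - 1) := calc
  _ = ∑ k ∈ range (n - 1 + 1), n.choose j * (n.choose k * (n - j).choose (n - 1 - k)) := by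
    rw [Nat.sub_add_cancel hn]
    refine sum_congr rfl fun k hk => ?_
    rw [mul_assoc, choose_mul_choose_eq_choose_mul_choose_sub j (mem_range.1 hk),
      show n - (k + 1) = n - 1 - k by omega]
    ring
  _ = n.choose j * (n + (n - j)).choose (n - 1) := by
    rw [← mul_sum, sum_range_choose_mul_choose_sub]

end Nat

open Nat

/-- The binomial identity `∑_{k ≥ 0} N(n,k) C(k+1,j) = (1/(n-j+1)) C(n,j) C(2n-j, n)`,
where `N(n,k) = (1/n) C(n,k) C(n,k+1)` is the Narayana number. -/
theorem narayana_sum_choose_succ (n j : ℕ) (hn : 1 ≤ n) (hj : j ≤ n) :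
    (∑ᶠ k : ℕ,
        (1 / (n : ℚ)) * (n.choose k) * (n.choose (k + 1)) * ((k + 1).choose j)) =
      (1 / ((n : ℚ) - j + 1)) * (n.choose j) * ((2 * n - j).choose n) := by
  have hsupp : (Function.support fun k : ℕ =>
      (1 / (n : ℚ)) * (n.choose k) * (n.choose (k + 1)) * ((k + 1).choose j)) ⊆ range n := by
    refine Function.support_subset_iff'.2 fun k hk => ?_
    simp [choose_eq_zero_of_lt (by simpa using hk : n < k + 1)]
  have hsum : ∑ k ∈ range n, (n.choose k : ℚ) * n.choose (k + 1) * (k + 1).choose j =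
      n.choose j * (n + (n - j)).choose (n - 1) := by
    exact_mod_cast sum_range_choose_mul_choose_succ_mul_choose j hn
  have hratio :
      ((n + (n - j)).choose n : ℚ) * n = (n + (n - j)).choose (n - 1) * (n - j + 1) := by
    have := choose_succ_right_eq (n + (n - j)) (n - 1)
    rw [Nat.sub_add_cancel hn, show n + (n - j) - (n - 1) = n - j + 1 by omega] at this
    exact_mod_cast this
  rw [finsum_eq_sum_of_support_subset _ hsupp, show 2 * n - j = n + (n - j) by omega]
  simp only [mul_assoc (1 / (n : ℚ))]
  rw [← mul_sum, hsum]
  have hn' : (n : ℚ) ≠ 0 := Nat.cast_ne_zero.2 (by omega)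
  have hj' : (n : ℚ) - j + 1 ≠ 0 := by
    have : (j : ℚ) ≤ n := by exact_mod_cast hj
    linarith
  field_simp
  linear_combination -(n.choose j : ℚ) * hratio
end

section
/- For every real number x with 0 < x < 3 − 2√2, set R = √(x² − 6x + 1), s = (1 + x − R)/(4x), S = 2s − 1, L = (1 − 5x + R) / (((x−1)² + (x+1)·R)·R), and B = (7x − 2x² − 1 + R)/(2x·R) − 1. Then the pair (L, B) satisfies the system of equations L = (1 + x·(B − S)·s)/(1 − x·S) and B = (1 + x·L·S + x·(L − s)·S)/(1 − x − x·S). -/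
/-!
Write `S` for the big Schröder series and `T = 1 - x - x S`. All five quantities are rational
in `x` and `R`, and modulo `R² = x² - 6x + 1` three identities carry the whole system:
`S T = 1` (the Schröder equation `S = 1 + x S + x S²`), `B = S (1 + x / R)` and
`2 L - s = T / R`. The second equation is then `B T = 1 + x / R = 1 + x S (2 L - s)`, and the
first reduces to a polynomial identity after rationalizing `L` to
`((3x + 1) R - (3x² - 8x + 1)) / (8 x R)`.
-/

theorem sq_sub_six_mul_add_one_pos {x : ℝ} (hx : x < 3 - 2 * Real.sqrt 2) :
    0 < x ^ 2 - 6 * x + 1 := by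
  have h2 : Real.sqrt 2 ^ 2 = 2 := Real.sq_sqrt (by norm_num)
  have hx' : x < 3 + 2 * Real.sqrt 2 := by linarith [Real.sqrt_nonneg 2]
  calc 0 < (3 - 2 * Real.sqrt 2 - x) * (3 + 2 * Real.sqrt 2 - x) :=
        mul_pos (sub_pos.2 hx) (sub_pos.2 hx')
    _ = x ^ 2 - 6 * x + 1 := by linear_combination -4 * h2

noncomputable section

/-! `R` stands for `√(x² - 6x + 1)`; the identities below only use `R ^ 2 = x ^ 2 - 6 * x + 1`. -/

def schroderLittle (x R : ℝ) : ℝ := (1 + x - R) / (4 * x)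

def schroderBig (x R : ℝ) : ℝ := 2 * schroderLittle x R - 1

def hybridLittle (x R : ℝ) : ℝ := (1 - 5 * x + R) / (((x - 1) ^ 2 + (x + 1) * R) * R)

def hybridBig (x R : ℝ) : ℝ := (7 * x - 2 * x ^ 2 - 1 + R) / (2 * x * R) - 1

variable {x R : ℝ}

theorem mul_schroderBig (hx : x ≠ 0) : x * schroderBig x R = (1 - x - R) / 2 := by
  unfold schroderBig schroderLittle
  field_simp
  ring

section

variable (hx : x ≠ 0) (hR2 : R ^ 2 = x ^ 2 - 6 * x + 1)
include hx hR2

theorem schroderBig_mul_one_sub_sub_mul :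
    schroderBig x R * (1 - x - x * schroderBig x R) = 1 := by
  apply mul_left_cancel₀ hx
  rw [← mul_assoc, mul_schroderBig hx]
  linear_combination (-1 / 4 : ℝ) * hR2

theorem one_sub_mul_schroderBig_ne_zero : 1 - x * schroderBig x R ≠ 0 := by
  rw [mul_schroderBig hx]
  intro h
  apply hx
  linear_combination (1 / 8 : ℝ) * hR2 + (1 + x - R) / 4 * h

theorem sq_sub_one_add_mul_ne_zero : (x - 1) ^ 2 + (x + 1) * R ≠ 0 := by
  intro h
  apply pow_ne_zero 2 hx
  linear_combination (1 / 16 : ℝ) * ((x - 1) ^ 2 - (x + 1) * R) * h + (x + 1) ^ 2 / 16 * hR2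

variable (hR : R ≠ 0)
include hR

theorem hybridBig_eq : hybridBig x R = schroderBig x R * (1 + x / R) := by
  unfold hybridBig schroderBig schroderLittle
  field_simp
  linear_combination 4 * hR2

theorem hybridLittle_eq :
    hybridLittle x R = ((3 * x + 1) * R - (3 * x ^ 2 - 8 * x + 1)) / (8 * x * R) := by
  have hD := sq_sub_one_add_mul_ne_zero hx hR2
  rw [hybridLittle, div_eq_div_iff (mul_ne_zero hD hR) (by simp [hx, hR])]
  linear_combination -(3 * x + 1) * (x + 1) * R * hR2

theorem two_mul_hybridLittle_sub :
    2 * hybridLittle x R - schroderLittle x R = (1 - x - x * schroderBig x R) / R := by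
  rw [mul_schroderBig hx, hybridLittle_eq hx hR2 hR, schroderLittle]
  field_simp
  linear_combination 16 * hR2

theorem hybridLittle_eq_system :
    hybridLittle x R = (1 + x * (hybridBig x R - schroderBig x R) * schroderLittle x R) /
      (1 - x * schroderBig x R) := by
  rw [eq_div_iff (one_sub_mul_schroderBig_ne_zero hx hR2), hybridBig_eq hx hR2 hR,
    hybridLittle_eq hx hR2 hR]
  have hs : x * schroderLittle x R = (1 + x - R) / 4 := by
    rw [schroderLittle]
    field_simp
  calc ((3 * x + 1) * R - (3 * x ^ 2 - 8 * x + 1)) / (8 * x * R) * (1 - x * schroderBig x R)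
      = 1 + x * schroderBig x R * (x * schroderLittle x R) / R := by
        rw [mul_schroderBig hx, hs]
        field_simp
        linear_combination 4 * (x + 1) * hR2
    _ = _ := by
        field_simp
        ring

theorem hybridBig_eq_system :
    hybridBig x R = (1 + x * hybridLittle x R * schroderBig x R +
      x * (hybridLittle x R - schroderLittle x R) * schroderBig x R) /
      (1 - x - x * schroderBig x R) := by
  have hST := schroderBig_mul_one_sub_sub_mul hx hR2
  rw [eq_div_iff (right_ne_zero_of_mul_eq_one hST)]
  calc hybridBig x R * (1 - x - x * schroderBig x R)
      = (1 + x / R) * (schroderBig x R * (1 - x - x * schroderBig x R)) := by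
        rw [hybridBig_eq hx hR2 hR]
        ring
    _ = 1 + x * (schroderBig x R * (2 * hybridLittle x R - schroderLittle x R)) := by
        rw [hST, two_mul_hybridLittle_sub hx hR2 hR, mul_div_assoc', hST]
        ring
    _ = _ := by ring

end

end

/-- For `0 < x < 3 - 2√2`, the closed-form expressions for the generating functions of
little hybrid paths `L` and big hybrid paths `B` satisfy the defining system of
equations. -/
theorem hybrid_gf_system (x : ℝ) (hx0 : 0 < x) (hx1 : x < 3 - 2 * Real.sqrt 2) :
    let R : ℝ := Real.sqrt (x ^ 2 - 6 * x + 1)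
    let s : ℝ := (1 + x - R) / (4 * x)
    let S : ℝ := 2 * s - 1
    let L : ℝ := (1 - 5 * x + R) / (((x - 1) ^ 2 + (x + 1) * R) * R)
    let B : ℝ := (7 * x - 2 * x ^ 2 - 1 + R) / (2 * x * R) - 1
    L = (1 + x * (B - S) * s) / (1 - x * S) ∧
      B = (1 + x * L * S + x * (L - s) * S) / (1 - x - x * S) := by
  have hq := sq_sub_six_mul_add_one_pos hx1
  have hR2 := Real.sq_sqrt hq.le
  have hR := (Real.sqrt_pos.2 hq).ne'
  exact ⟨hybridLittle_eq_system hx0.ne' hR2 hR, hybridBig_eq_system hx0.ne' hR2 hR⟩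
end
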